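/- In Minkowski space, for a point q = p₀ + r₀ l(ω) + r n(q,ω) in the chronological future of p₀ (with l, n null, g(l,n)=1), the gradients with respect to q of the affine parameters satisfy ∇^q r = l and ∇^q r₀ = n. -/

import Mathlib

/-!
Differentiating `q - p₀ = r₀ l + r n` gives
`v = dr₀(v) l + r₀ dl(v) + dr(v) n + r dn(v)`. Pairing with `l` and `n` kills everything
except `dr(v)`, resp. `dr₀(v)`: the pairings with `dn`, resp. `dl`, vanish by hypothesis, and
`g(l, dl v) = g(n, dn v) = 0` because `l` and `n` stay null. The last step differentiates the
quadratic form `x ↦ g(x, x)`, which need not be continuous in infinite dimension; it is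
differentiable here because it equals `2 r₀ r` along `x = q - p₀`.
-/

section BilinForm

variable {V : Type*} [NormedAddCommGroup V] [NormedSpace ℝ V]
  (g : LinearMap.BilinForm ℝ V)

theorem LinearMap.BilinForm.fderiv_apply_self_apply (hg : ∀ x y, g x y = g y x) {x : V}
    (h : DifferentiableAt ℝ (fun z => g z z) x) (y : V) :
    fderiv ℝ (fun z => g z z) x y = 2 * g x y := by
  have hline : HasDerivAt (fun t : ℝ => g (x + t • y) (x + t • y))
      (fderiv ℝ (fun z => g z z) x y) 0 := by
    have hcurve : HasDerivAt (fun t : ℝ => x + t • y) y 0 := by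
      simpa using ((hasDerivAt_id (0 : ℝ)).smul_const y).const_add x
    exact h.hasFDerivAt.comp_hasDerivAt_of_eq 0 hcurve (by simp)
  have hexpand : (fun t : ℝ => g (x + t • y) (x + t • y)) =
      fun t => g x x + t * (2 * g x y) + t ^ 2 * g y y := by
    funext t
    simp only [map_add, map_smul, LinearMap.add_apply, LinearMap.smul_apply, smul_eq_mul,
      hg y x]
    ring
  have hpoly : HasDerivAt (fun t : ℝ => g (x + t • y) (x + t • y)) (2 * g x y) 0 := by
    rw [hexpand]
    simpa [Pi.add_def] using
      (((hasDerivAt_id (0 : ℝ)).mul_const (2 * g x y)).const_add (g x x)).add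
        ((hasDerivAt_pow 2 (0 : ℝ)).mul_const (g y y))
  exact hline.unique hpoly

theorem LinearMap.BilinForm.apply_fderiv_eq_zero_of_isotropic (hg : ∀ x y, g x y = g y x)
    {E : Type*} [NormedAddCommGroup E] [NormedSpace ℝ E] {e : E → V} {q : E}
    (he : DifferentiableAt ℝ e q) (hquad : DifferentiableAt ℝ (fun z => g z z) (e q))
    (hnull : ∀ p, g (e p) (e p) = 0) (v : E) :
    g (e q) (fderiv ℝ e q v) = 0 := by
  have hcomp : fderiv ℝ ((fun z => g z z) ∘ e) q v = 2 * g (e q) (fderiv ℝ e q v) := by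
    rw [fderiv_comp q hquad he, ContinuousLinearMap.comp_apply,
      g.fderiv_apply_self_apply hg hquad]
  have hzero : (fun z => g z z) ∘ e = fun _ => 0 := funext hnull
  rw [hzero, fderiv_const_apply] at hcomp
  simpa using hcomp.symm

end BilinForm

/-- In Minkowski space, for `q = p₀ + r₀·l + r·n` in the chronological future of
`p₀`, with `l = l(ω(q))` and `n = n(q,ω)` null vector fields normalized by
`g(l,n) = 1`, and whose variations stay `g`-orthogonal to the plane spanned by
`l, n` (they vary in the `m, m̄` directions), the gradients of the affine
parameters satisfy `∇^q r = l` and `∇^q r₀ = n`, i.e.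
`dr(v) = g(l,v)` and `dr₀(v) = g(n,v)` for every direction `v`. -/
theorem stmt18 {V : Type*} [NormedAddCommGroup V] [NormedSpace ℝ V]
    (g : V →ₗ[ℝ] V →ₗ[ℝ] ℝ) (hsymm : ∀ x y : V, g x y = g y x)
    (p₀ : V) (r0 r : V → ℝ) (l n : V → V)
    (hr0 : Differentiable ℝ r0) (hr : Differentiable ℝ r)
    (hl : Differentiable ℝ l) (hn : Differentiable ℝ n)
    (hll : ∀ q, g (l q) (l q) = 0) (hnn : ∀ q, g (n q) (n q) = 0)
    (hln : ∀ q, g (l q) (n q) = 1)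
    (hpos : ∀ q : V, q - p₀ = r0 q • l q + r q • n q)
    (hvar_l : ∀ q v, g (fderiv ℝ l q v) (n q) = 0)
    (hvar_n : ∀ q v, g (fderiv ℝ n q v) (l q) = 0) :
    (∀ q v, fderiv ℝ r q v = g (l q) v) ∧
    (∀ q v, fderiv ℝ r0 q v = g (n q) v) := by
  have hnl : ∀ q, g (n q) (l q) = 1 := fun q => (hsymm _ _).trans (hln q)
  have hquad_eq : ∀ q, g (q - p₀) (q - p₀) = 2 * r0 q * r q := by
    intro q
    rw [hpos]
    simp only [map_add, map_smul, LinearMap.add_apply, LinearMap.smul_apply, smul_eq_mul,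
      hll, hnn, hln, hnl]
    ring
  have hquad : Differentiable ℝ fun x => g x x := by
    have hform : (fun x => g x x) = fun x => 2 * r0 (p₀ + x) * r (p₀ + x) :=
      funext fun x => by simpa using hquad_eq (p₀ + x)
    rw [hform]
    fun_prop
  have hdl : ∀ q v, g (l q) (fderiv ℝ l q v) = 0 := fun q =>
    LinearMap.BilinForm.apply_fderiv_eq_zero_of_isotropic g hsymm (hl q) (hquad _) hll
  have hdn : ∀ q v, g (n q) (fderiv ℝ n q v) = 0 := fun q =>
    LinearMap.BilinForm.apply_fderiv_eq_zero_of_isotropic g hsymm (hn q) (hquad _) hnn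
  have hframe_deriv : ∀ q v : V, v = r0 q • fderiv ℝ l q v + fderiv ℝ r0 q v • l q
      + (r q • fderiv ℝ n q v + fderiv ℝ r q v • n q) := by
    intro q v
    have hderiv : HasFDerivAt (fun p => p - p₀)
        (r0 q • fderiv ℝ l q + (fderiv ℝ r0 q).smulRight (l q)
          + (r q • fderiv ℝ n q + (fderiv ℝ r q).smulRight (n q))) q :=
      (((hr0 q).hasFDerivAt.smul (hl q).hasFDerivAt).add
        ((hr q).hasFDerivAt.smul (hn q).hasFDerivAt)).congr_of_eventuallyEq (.of_forall hpos)
    simpa using congrArg (· v) (((hasFDerivAt_id q).sub_const p₀).unique hderiv)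
  refine ⟨fun q v => ?_, fun q v => ?_⟩
  · have := congrArg (g (l q)) (hframe_deriv q v)
    simp only [map_add, map_smul, smul_eq_mul, hll, hln, hdl, hsymm (l q) (fderiv ℝ n q v),
      hvar_n] at this
    linarith
  · have := congrArg (g (n q)) (hframe_deriv q v)
    simp only [map_add, map_smul, smul_eq_mul, hnn, hnl, hdn, hsymm (n q) (fderiv ℝ l q v),
      hvar_l] at this
    linarith
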